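/- arXiv:2006.08969 — 2 statements merged into one kernel-verified Lean document; each statement's English description precedes it below -/
import Mathlib

section
/- Let n ≥ 1, let f : {0,1}^n → ℝ be a pseudo-Boolean function, and let 1 ≤ k ≤ n. Among all multilinear polynomials of degree at most k, i.e. functions g(x) = Σ_{S ⊆ {1,…,n}, |S| ≤ k} a_S ∏_{i∈S} x_i with real coefficients a_S, there is a unique g minimizing the squared loss Σ_{x ∈ {0,1}^n} (f(x) − g(x))², and for every subset S with |S| = k the coefficient a_S of ∏_{i∈S} x_i in this minimizer equals the Banzhaf interaction index I_BII(S) = (1/2^{n−k}) Σ_{T ⊆ {1,…,n}∖S} Σ_{L ⊆ S} (−1)^{|S|−|L|} f(1_{T∪L}). -/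
open Finset
open scoped symmDiff

/-- The real value of a Boolean bit. -/
noncomputable def bit (b : Bool) : ℝ := if b then 1 else 0

/-- Indicator vector of a subset of `{1,…,n}`, as a point of `{0,1}^n`. -/
def ind {n : ℕ} (A : Finset (Fin n)) : Fin n → Bool := fun i => decide (i ∈ A)

/-- The multilinear monomial `∏_{i ∈ S} x_i`. -/
noncomputable def monom {n : ℕ} (S : Finset (Fin n)) (x : Fin n → Bool) : ℝ := ∏ i ∈ S, bit (x i)

/-- The multilinear polynomial with coefficient family `a`. -/
noncomputable def poly {n : ℕ} (a : Finset (Fin n) → ℝ) (x : Fin n → Bool) : ℝ :=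
  ∑ S : Finset (Fin n), a S * monom S x

/-- The squared loss of the approximation of `f` by the multilinear polynomial
with coefficients `a`, summed over all points of `{0,1}^n`. -/
noncomputable def loss {n : ℕ} (f : (Fin n → Bool) → ℝ) (a : Finset (Fin n) → ℝ) : ℝ :=
  ∑ x : Fin n → Bool, (f x - poly a x) ^ 2

/-- The Banzhaf interaction index of the set `S` for the pseudo-Boolean function `f`. -/
noncomputable def BII {n : ℕ} (f : (Fin n → Bool) → ℝ) (S : Finset (Fin n)) : ℝ :=
  (1 / 2 ^ (n - S.card)) *
    ∑ T ∈ (Finset.univ \ S).powerset, ∑ L ∈ S.powerset,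
      (-1 : ℝ) ^ (S.card - L.card) * f (ind (T ∪ L))



noncomputable def sgn (b : Bool) : ℝ := if b then 1 else -1
noncomputable def phi {n : ℕ} (S : Finset (Fin n)) (x : Fin n → Bool) : ℝ := ∏ i ∈ S, sgn (x i)

lemma sgn_sq (b : Bool) : sgn b * sgn b = 1 := by cases b <;> simp [sgn]
lemma two_bit (b : Bool) : 2 * bit b = 1 + sgn b := by cases b <;> norm_num [bit, sgn]

lemma sum_phi {n : ℕ} (U : Finset (Fin n)) :
    ∑ x : Fin n → Bool, phi U x = if U = ∅ then (2:ℝ)^n else 0 := by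
  have h : ∀ x : Fin n → Bool, phi U x = ∏ i : Fin n, (if i ∈ U then sgn (x i) else 1) := by
    intro x
    rw [phi, ← Finset.prod_filter]
    congr 1
    simp [Finset.filter_mem_eq_inter]
  simp_rw [h]
  rw [← Fintype.prod_sum (fun (i : Fin n) (b : Bool) => if i ∈ U then sgn b else 1)]
  have h2 : ∀ i : Fin n, (∑ b : Bool, if i ∈ U then sgn b else 1) = if i ∈ U then 0 else 2 := by
    intro i; by_cases hi : i ∈ U <;> simp [hi, sgn]
  simp_rw [h2]
  by_cases hU : U = ∅
  · simp [hU]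
  · rw [if_neg hU]
    obtain ⟨i, hi⟩ := Finset.nonempty_iff_ne_empty.2 hU
    exact Finset.prod_eq_zero (Finset.mem_univ i) (by simp [hi])

lemma phi_mul {n : ℕ} (S T : Finset (Fin n)) (x : Fin n → Bool) :
    phi S x * phi T x = phi (S ∆ T) x := by
  classical
  have hS : phi S x = phi (S \ T) x * phi (S ∩ T) x := by
    rw [phi, phi, phi, ← Finset.prod_union (Finset.disjoint_sdiff_inter S T),
      Finset.sdiff_union_inter]
  have hT : phi T x = phi (T \ S) x * phi (S ∩ T) x := by
    rw [phi, phi, phi, ← Finset.prod_union, Finset.inter_comm,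
      Finset.sdiff_union_inter]
    exact Finset.disjoint_sdiff_inter T S |>.mono_right (by rw [Finset.inter_comm])
  have hst : phi (S ∩ T) x * phi (S ∩ T) x = 1 := by
    rw [phi, ← Finset.prod_mul_distrib]
    exact Finset.prod_eq_one fun i _ => sgn_sq (x i)
  have hd : phi (S ∆ T) x = phi (S \ T) x * phi (T \ S) x := by
    rw [phi, phi, phi, ← Finset.prod_union disjoint_sdiff_sdiff]
    rfl
  rw [hS, hT, hd]
  have : phi (S ∩ T) x ^ 2 = 1 := by rw [sq, hst]
  ring_nf
  rw [this]; ring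

lemma phi_orth {n : ℕ} (S T : Finset (Fin n)) :
    ∑ x : Fin n → Bool, phi S x * phi T x = if S = T then (2:ℝ)^n else 0 := by
  simp_rw [phi_mul]
  rw [sum_phi]
  congr 1
  simp [symmDiff_eq_bot]

lemma monom_eq {n : ℕ} (S : Finset (Fin n)) (x : Fin n → Bool) :
    (2:ℝ)^S.card * monom S x = ∑ T ∈ S.powerset, phi T x := by
  calc (2:ℝ)^S.card * monom S x = ∏ i ∈ S, (sgn (x i) + 1) := by
        rw [monom, ← Finset.prod_const, ← Finset.prod_mul_distrib]
        exact Finset.prod_congr rfl fun i _ => by rw [two_bit]; ring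
    _ = ∑ T ∈ S.powerset, (∏ i ∈ T, sgn (x i)) * ∏ i ∈ S \ T, 1 :=
        Finset.prod_add _ _ S
    _ = ∑ T ∈ S.powerset, phi T x := by simp [phi]

lemma monom_eq' {n : ℕ} (S : Finset (Fin n)) (x : Fin n → Bool) :
    monom S x = ∑ T ∈ S.powerset, phi T x / 2^S.card := by
  rw [← Finset.sum_div, ← monom_eq]
  field_simp

/-- phi-coefficients of the polynomial with monomial coefficients `a`. -/
noncomputable def cOf {n : ℕ} (a : Finset (Fin n) → ℝ) (T : Finset (Fin n)) : ℝ :=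
  ∑ S ∈ Finset.univ.filter (fun S => T ⊆ S), a S / 2^S.card

lemma poly_phi {n : ℕ} (a : Finset (Fin n) → ℝ) (x : Fin n → Bool) :
    poly a x = ∑ T : Finset (Fin n), cOf a T * phi T x := by
  calc poly a x = ∑ S : Finset (Fin n), ∑ T ∈ S.powerset, (a S / 2^S.card) * phi T x := by
        refine Finset.sum_congr rfl fun S _ => ?_
        rw [monom_eq', Finset.mul_sum]
        exact Finset.sum_congr rfl fun T _ => by ring
    _ = ∑ T : Finset (Fin n), ∑ S ∈ Finset.univ.filter (fun S => T ⊆ S),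
          (a S / 2^S.card) * phi T x := by
        refine Finset.sum_comm' fun S T => ?_
        simp [Finset.mem_powerset]
    _ = ∑ T : Finset (Fin n), cOf a T * phi T x := by
        refine Finset.sum_congr rfl fun T _ => ?_
        rw [cOf, Finset.sum_mul]

lemma sum_pow_neg_one {n : ℕ} (s : Finset (Fin n)) :
    ∑ t ∈ s.powerset, (-1:ℝ)^t.card = if s = ∅ then 1 else 0 := by
  calc ∑ t ∈ s.powerset, (-1:ℝ)^t.card
      = ∑ t ∈ s.powerset, (∏ _i ∈ t, (-1:ℝ)) * ∏ _i ∈ s \ t, (1:ℝ) := by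
        simp [Finset.prod_const]
    _ = ∏ _i ∈ s, ((-1:ℝ) + 1) := (Finset.prod_add _ _ s).symm
    _ = if s = ∅ then 1 else 0 := by
        by_cases h : s = ∅
        · simp [h]
        · rw [if_neg h]
          obtain ⟨i, hi⟩ := Finset.nonempty_iff_ne_empty.2 h
          exact Finset.prod_eq_zero hi (by norm_num)

lemma neg_one_pow_sub {m j : ℕ} (h : j ≤ m) : (-1:ℝ)^(m - j) = (-1)^m * (-1)^j := by
  have h1 : ((-1:ℝ))^j * (-1)^j = 1 := by
    rw [← pow_add]
    exact Even.neg_one_pow ⟨j, rfl⟩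
  calc (-1:ℝ)^(m-j) = (-1:ℝ)^(m-j) * ((-1:ℝ)^j * (-1)^j) := by rw [h1, mul_one]
    _ = ((-1:ℝ)^(m-j) * (-1)^j) * (-1)^j := by ring
    _ = (-1:ℝ)^m * (-1)^j := by rw [← pow_add, Nat.sub_add_cancel h]

lemma interval_reindex {n : ℕ} (S V : Finset (Fin n)) (hSV : S ⊆ V)
    (F : Finset (Fin n) → ℝ) :
    ∑ U ∈ Finset.univ.filter (fun U => S ⊆ U ∧ U ⊆ V), F U
      = ∑ W ∈ (V \ S).powerset, F (S ∪ W) := by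
  refine Finset.sum_nbij' (fun U => U \ S) (fun W => S ∪ W) ?_ ?_ ?_ ?_ ?_
  · intro U hU
    rw [Finset.mem_filter] at hU
    exact Finset.mem_powerset.2 (Finset.sdiff_subset_sdiff hU.2.2 (le_refl _))
  · intro W hW
    rw [Finset.mem_powerset] at hW
    refine Finset.mem_filter.2 ⟨Finset.mem_univ _, Finset.subset_union_left,
      Finset.union_subset hSV (hW.trans Finset.sdiff_subset)⟩
  · intro U hU
    rw [Finset.mem_filter] at hU
    exact Finset.union_sdiff_of_subset hU.2.1
  · intro W hW
    rw [Finset.mem_powerset] at hW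
    exact Finset.union_sdiff_cancel_left
      (Finset.disjoint_of_subset_right hW Finset.disjoint_sdiff)
  · intro U hU
    rw [Finset.mem_filter] at hU
    rw [Finset.union_sdiff_of_subset hU.2.1]

lemma filter_interval_empty {n : ℕ} {S V : Finset (Fin n)} (h : ¬ S ⊆ V) :
    Finset.univ.filter (fun U => S ⊆ U ∧ U ⊆ V) = (∅ : Finset (Finset (Fin n))) := by
  refine Finset.filter_eq_empty_iff.2 fun U _ => ?_
  rintro ⟨h1, h2⟩
  exact h (h1.trans h2)

lemma deltaA {n : ℕ} (S V : Finset (Fin n)) :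
    ∑ U ∈ Finset.univ.filter (fun U => S ⊆ U ∧ U ⊆ V), (-1:ℝ)^(U.card - S.card)
      = if S = V then 1 else 0 := by
  by_cases hSV : S ⊆ V
  · rw [interval_reindex S V hSV]
    have hc : ∀ W ∈ (V \ S).powerset, (S ∪ W).card - S.card = W.card := by
      intro W hW
      rw [Finset.mem_powerset] at hW
      rw [Finset.card_union_of_disjoint
        (Finset.disjoint_of_subset_right hW Finset.disjoint_sdiff)]
      omega
    rw [Finset.sum_congr rfl fun W hW => by rw [hc W hW]]
    rw [sum_pow_neg_one]
    congr 1
    rw [Finset.sdiff_eq_empty_iff_subset]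
    apply propext
    exact ⟨fun h => Finset.Subset.antisymm hSV h, fun h => h ▸ Finset.Subset.refl S⟩
  · rw [filter_interval_empty hSV, Finset.sum_empty, if_neg]
    intro h; exact hSV (h ▸ Finset.Subset.refl S)

lemma deltaB {n : ℕ} (S V : Finset (Fin n)) :
    ∑ U ∈ Finset.univ.filter (fun U => S ⊆ U ∧ U ⊆ V), (-1:ℝ)^(V.card - U.card)
      = if S = V then 1 else 0 := by
  by_cases hSV : S ⊆ V
  · rw [interval_reindex S V hSV]
    have hc : ∀ W ∈ (V \ S).powerset, (-1:ℝ)^(V.card - (S ∪ W).card)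
        = (-1:ℝ)^((V \ S).card) * (-1:ℝ)^W.card := by
      intro W hW
      rw [Finset.mem_powerset] at hW
      have hdisj := Finset.disjoint_of_subset_right hW Finset.disjoint_sdiff
      have h1 : (S ∪ W).card = S.card + W.card := Finset.card_union_of_disjoint hdisj
      have h2 : (V \ S).card = V.card - S.card := Finset.card_sdiff_of_subset hSV
      have hWle : W.card ≤ (V \ S).card := Finset.card_le_card hW
      have hSle : S.card ≤ V.card := Finset.card_le_card hSV
      have h3 : V.card - (S ∪ W).card = (V \ S).card - W.card := by omega
      rw [h3, neg_one_pow_sub hWle]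
    rw [Finset.sum_congr rfl hc, ← Finset.mul_sum, sum_pow_neg_one]
    by_cases h : V \ S = ∅
    · have : S = V := Finset.Subset.antisymm hSV (Finset.sdiff_eq_empty_iff_subset.1 h)
      simp [h, this]
    · have : ¬ S = V := fun hEq => h (by rw [hEq]; simp)
      simp [h, this]
  · rw [filter_interval_empty hSV, Finset.sum_empty, if_neg]
    intro h; exact hSV (h ▸ Finset.Subset.refl S)

lemma cOf_inv {n : ℕ} (a : Finset (Fin n) → ℝ) (S : Finset (Fin n)) :
    a S = 2^S.card * ∑ U ∈ Finset.univ.filter (fun U => S ⊆ U),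
        (-1:ℝ)^(U.card - S.card) * cOf a U := by
  have step1 : ∑ U ∈ Finset.univ.filter (fun U => S ⊆ U), (-1:ℝ)^(U.card - S.card) * cOf a U
      = ∑ U ∈ Finset.univ.filter (fun U => S ⊆ U), ∑ V ∈ Finset.univ.filter (fun V => U ⊆ V),
          (-1:ℝ)^(U.card - S.card) * (a V / 2^V.card) := by
    refine Finset.sum_congr rfl fun U _ => ?_
    rw [cOf, Finset.mul_sum]
  have hcomm : ∀ (U V : Finset (Fin n)),
      U ∈ Finset.univ.filter (fun U => S ⊆ U) ∧ V ∈ Finset.univ.filter (fun V => U ⊆ V) ↔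
      U ∈ Finset.univ.filter (fun U => S ⊆ U ∧ U ⊆ V) ∧ V ∈ Finset.univ := by
    intro U V; simp only [Finset.mem_filter, Finset.mem_univ, true_and, and_true]
  rw [step1, Finset.sum_comm' hcomm]
  have step2 : ∀ V : Finset (Fin n),
      ∑ U ∈ Finset.univ.filter (fun U => S ⊆ U ∧ U ⊆ V),
        (-1:ℝ)^(U.card - S.card) * (a V / 2^V.card)
      = (if S = V then 1 else 0) * (a V / 2^V.card) := by
    intro V; rw [← Finset.sum_mul, deltaA]
  rw [Finset.sum_congr rfl fun V _ => step2 V]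
  have step3 : ∑ V : Finset (Fin n), (if S = V then (1:ℝ) else 0) * (a V / 2^V.card)
      = a S / 2^S.card := by
    rw [Finset.sum_congr rfl (fun V _ => by rw [ite_mul])]
    simp [Finset.sum_ite_eq]
  rw [step3]
  field_simp

noncomputable def dcoef {n : ℕ} (f : (Fin n → Bool) → ℝ) (T : Finset (Fin n)) : ℝ :=
  ∑ x : Fin n → Bool, f x * phi T x

noncomputable def hatf {n : ℕ} (f : (Fin n → Bool) → ℝ) (T : Finset (Fin n)) : ℝ :=
  dcoef f T / 2^n

noncomputable def astar {n : ℕ} (f : (Fin n → Bool) → ℝ) (k : ℕ) (S : Finset (Fin n)) : ℝ :=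
  2^S.card * ∑ U ∈ Finset.univ.filter (fun U => S ⊆ U ∧ U.card ≤ k),
    (-1:ℝ)^(U.card - S.card) * hatf f U

lemma astar_adm {n : ℕ} (f : (Fin n → Bool) → ℝ) (k : ℕ) (S : Finset (Fin n))
    (hS : k < S.card) : astar f k S = 0 := by
  rw [astar]
  have : Finset.univ.filter (fun U => S ⊆ U ∧ U.card ≤ k) = ∅ := by
    refine Finset.filter_eq_empty_iff.2 fun U _ => ?_
    rintro ⟨h1, h2⟩
    exact absurd (Finset.card_le_card h1) (by omega)
  rw [this, Finset.sum_empty, mul_zero]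

lemma cOf_astar {n : ℕ} (f : (Fin n → Bool) → ℝ) (k : ℕ) (T : Finset (Fin n)) :
    cOf (astar f k) T = if T.card ≤ k then hatf f T else 0 := by
  have e1 : ∀ S : Finset (Fin n), astar f k S / 2^S.card
      = ∑ U ∈ Finset.univ.filter (fun U => S ⊆ U ∧ U.card ≤ k),
          (-1:ℝ)^(U.card - S.card) * hatf f U := by
    intro S; rw [astar]; field_simp
  rw [cOf, Finset.sum_congr rfl fun S _ => e1 S]
  have hcomm : ∀ (S U : Finset (Fin n)),
      S ∈ Finset.univ.filter (fun S => T ⊆ S) ∧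
        U ∈ Finset.univ.filter (fun U => S ⊆ U ∧ U.card ≤ k) ↔
      S ∈ Finset.univ.filter (fun S => T ⊆ S ∧ S ⊆ U) ∧
        U ∈ Finset.univ.filter (fun U => T ⊆ U ∧ U.card ≤ k) := by
    intro S U
    simp only [Finset.mem_filter, Finset.mem_univ, true_and]
    constructor
    · rintro ⟨h1, h2, h3⟩; exact ⟨⟨h1, h2⟩, h1.trans h2, h3⟩
    · rintro ⟨⟨h1, h2⟩, _, h3⟩; exact ⟨h1, h2, h3⟩
  rw [Finset.sum_comm' hcomm]
  have step2 : ∀ U : Finset (Fin n),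
      ∑ S ∈ Finset.univ.filter (fun S => T ⊆ S ∧ S ⊆ U),
        (-1:ℝ)^(U.card - S.card) * hatf f U
      = (if T = U then 1 else 0) * hatf f U := by
    intro U; rw [← Finset.sum_mul, deltaB]
  rw [Finset.sum_congr rfl fun U _ => step2 U]
  rw [Finset.sum_congr rfl (fun U _ => by rw [ite_mul])]
  simp only [one_mul, zero_mul]
  rw [Finset.sum_ite_eq]
  simp only [Finset.mem_filter, Finset.mem_univ, true_and]
  by_cases h : T.card ≤ k
  · rw [if_pos ⟨Finset.Subset.refl T, h⟩, if_pos h]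
  · rw [if_neg (fun hc => h hc.2), if_neg h]



lemma loss_expand {n : ℕ} (f : (Fin n → Bool) → ℝ) (b : Finset (Fin n) → ℝ) :
    loss f b = (∑ x : Fin n → Bool, (f x)^2)
      - 2 * ∑ T : Finset (Fin n), cOf b T * dcoef f T
      + 2^n * ∑ T : Finset (Fin n), (cOf b T)^2 := by
  set c := cOf b with hc
  have e1 : ∀ x, (f x - poly b x)^2
      = (f x)^2 - 2 * (f x * poly b x) + (poly b x)^2 := fun x => by ring
  have cross : ∑ x : Fin n → Bool, f x * poly b x
      = ∑ T : Finset (Fin n), c T * dcoef f T := by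
    have : ∀ x, f x * poly b x = ∑ T : Finset (Fin n), c T * (f x * phi T x) := by
      intro x
      rw [poly_phi, Finset.mul_sum]
      exact Finset.sum_congr rfl fun T _ => by ring
    rw [Finset.sum_congr rfl fun x _ => this x, Finset.sum_comm]
    refine Finset.sum_congr rfl fun T _ => ?_
    rw [dcoef, Finset.mul_sum]
  have sq : ∑ x : Fin n → Bool, (poly b x)^2 = 2^n * ∑ T : Finset (Fin n), (c T)^2 := by
    have e2 : ∀ x, (poly b x)^2 = ∑ T : Finset (Fin n), ∑ U : Finset (Fin n),
        (c T * c U) * (phi T x * phi U x) := by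
      intro x
      rw [poly_phi, sq, Finset.sum_mul_sum]
      exact Finset.sum_congr rfl fun T _ => Finset.sum_congr rfl fun U _ => by ring
    rw [Finset.sum_congr rfl fun x _ => e2 x, Finset.sum_comm]
    have e3 : ∀ T : Finset (Fin n), ∑ x : Fin n → Bool, ∑ U : Finset (Fin n),
        (c T * c U) * (phi T x * phi U x) = 2^n * (c T)^2 := by
      intro T
      rw [Finset.sum_comm]
      have e4 : ∀ U : Finset (Fin n), ∑ x : Fin n → Bool,
          (c T * c U) * (phi T x * phi U x)
          = (c T * c U) * (if T = U then (2:ℝ)^n else 0) := by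
        intro U; rw [← Finset.mul_sum, phi_orth]
      rw [Finset.sum_congr rfl fun U _ => e4 U]
      simp only [mul_ite, mul_zero]
      rw [Finset.sum_ite_eq]
      simp [sq]; ring
    rw [Finset.sum_congr rfl fun T _ => e3 T, ← Finset.mul_sum]
  rw [loss, Finset.sum_congr rfl fun x _ => e1 x]
  rw [Finset.sum_add_distrib, Finset.sum_sub_distrib, ← Finset.mul_sum, cross, sq]

lemma loss_square {n : ℕ} (f : (Fin n → Bool) → ℝ) (b : Finset (Fin n) → ℝ) :
    loss f b = ((∑ x : Fin n → Bool, (f x)^2)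
        - 2^n * ∑ T : Finset (Fin n), (hatf f T)^2)
      + 2^n * ∑ T : Finset (Fin n), (cOf b T - hatf f T)^2 := by
  rw [loss_expand]
  have h2n : (2:ℝ)^n ≠ 0 := by positivity
  have e : ∀ T : Finset (Fin n),
      (cOf b T - hatf f T)^2 = (cOf b T)^2 - 2 * cOf b T * hatf f T + (hatf f T)^2 :=
    fun T => by ring
  have ed : ∀ T : Finset (Fin n), cOf b T * dcoef f T = 2^n * (cOf b T * hatf f T) := by
    intro T; rw [hatf]; field_simp
  rw [Finset.sum_congr rfl fun T _ => e T, Finset.sum_congr rfl fun T _ => ed T]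
  rw [Finset.sum_add_distrib, Finset.sum_sub_distrib]
  simp_rw [mul_assoc]
  rw [← Finset.mul_sum, ← Finset.mul_sum]
  ring

lemma cOf_adm {n k : ℕ} (b : Finset (Fin n) → ℝ) (hb : ∀ S : Finset (Fin n), k < S.card → b S = 0)
    (T : Finset (Fin n)) (hT : k < T.card) : cOf b T = 0 := by
  rw [cOf]
  refine Finset.sum_eq_zero fun S hS => ?_
  rw [Finset.mem_filter] at hS
  rw [hb S (lt_of_lt_of_le hT (Finset.card_le_card hS.2)), zero_div]

lemma cOf_sq_le {n k : ℕ} (f : (Fin n → Bool) → ℝ) (b : Finset (Fin n) → ℝ)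
    (hb : ∀ S : Finset (Fin n), k < S.card → b S = 0) (T : Finset (Fin n)) :
    (cOf (astar f k) T - hatf f T)^2 ≤ (cOf b T - hatf f T)^2 := by
  by_cases hT : T.card ≤ k
  · rw [cOf_astar, if_pos hT, sub_self]
    simpa using sq_nonneg (cOf b T - hatf f T)
  · rw [cOf_astar, if_neg hT, cOf_adm b hb T (lt_of_not_ge hT)]

lemma loss_astar_le {n k : ℕ} (f : (Fin n → Bool) → ℝ) (b : Finset (Fin n) → ℝ)
    (hb : ∀ S : Finset (Fin n), k < S.card → b S = 0) :
    loss f (astar f k) ≤ loss f b := by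
  rw [loss_square, loss_square]
  have h1 : ∑ T : Finset (Fin n), (cOf (astar f k) T - hatf f T)^2
      ≤ ∑ T : Finset (Fin n), (cOf b T - hatf f T)^2 :=
    Finset.sum_le_sum fun T _ => cOf_sq_le f b hb T
  have h2 : (0:ℝ) ≤ 2^n := by positivity
  nlinarith

lemma eq_astar {n k : ℕ} (f : (Fin n → Bool) → ℝ) (b : Finset (Fin n) → ℝ)
    (hb : ∀ S : Finset (Fin n), k < S.card → b S = 0)
    (hle : loss f b ≤ loss f (astar f k)) : b = astar f k := by
  have heq : loss f b = loss f (astar f k) :=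
    le_antisymm hle (loss_astar_le f b hb)
  have h2n : (0:ℝ) < 2^n := by positivity
  have hsum : ∑ T : Finset (Fin n), (cOf b T - hatf f T)^2
      = ∑ T : Finset (Fin n), (cOf (astar f k) T - hatf f T)^2 := by
    rw [loss_square, loss_square] at heq
    have := add_left_cancel heq
    exact mul_left_cancel₀ (ne_of_gt h2n) this
  have hterm : ∀ T ∈ (Finset.univ : Finset (Finset (Fin n))),
      (cOf b T - hatf f T)^2 - (cOf (astar f k) T - hatf f T)^2 = 0 := by
    have hnn : ∀ T ∈ (Finset.univ : Finset (Finset (Fin n))),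
        0 ≤ (cOf b T - hatf f T)^2 - (cOf (astar f k) T - hatf f T)^2 :=
      fun T _ => sub_nonneg.2 (cOf_sq_le f b hb T)
    have hz : ∑ T : Finset (Fin n),
        ((cOf b T - hatf f T)^2 - (cOf (astar f k) T - hatf f T)^2) = 0 := by
      rw [Finset.sum_sub_distrib, hsum, sub_self]
    exact (Finset.sum_eq_zero_iff_of_nonneg hnn).1 hz
  have hcof : ∀ T : Finset (Fin n), cOf b T = cOf (astar f k) T := by
    intro T
    by_cases hT : T.card ≤ k
    · have h1 := hterm T (Finset.mem_univ T)
      have h0 : (cOf (astar f k) T - hatf f T)^2 = 0 := by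
        rw [cOf_astar, if_pos hT, sub_self]; ring
      have : (cOf b T - hatf f T)^2 = 0 := by linarith [h1, h0]
      have := pow_eq_zero_iff (n := 2) (by norm_num) |>.1 this
      have hbT : cOf b T = hatf f T := by linarith [sub_eq_zero.1 this]
      rw [hbT, cOf_astar, if_pos hT]
    · rw [cOf_adm b hb T (lt_of_not_ge hT), cOf_astar, if_neg hT]
  funext S
  calc b S = 2^S.card * ∑ U ∈ Finset.univ.filter (fun U => S ⊆ U),
        (-1:ℝ)^(U.card - S.card) * cOf b U := cOf_inv b S
    _ = 2^S.card * ∑ U ∈ Finset.univ.filter (fun U => S ⊆ U),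
        (-1:ℝ)^(U.card - S.card) * cOf (astar f k) U := by
        congr 1
        exact Finset.sum_congr rfl fun U _ => by rw [hcof U]
    _ = astar f k S := (cOf_inv (astar f k) S).symm

lemma phi_ind {n : ℕ} (S T L : Finset (Fin n)) (hT : Disjoint T S) (hL : L ⊆ S) :
    phi S (ind (T ∪ L)) = (-1:ℝ)^(S.card - L.card) := by
  rw [phi]
  have h1 : ∀ i ∈ S, sgn (ind (T ∪ L) i) = if i ∈ L then (1:ℝ) else -1 := by
    intro i hi
    by_cases hiL : i ∈ L
    · simp [ind, sgn, hiL]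
    · have hiT : i ∉ T := fun h => (Finset.disjoint_left.1 hT) h hi
      simp [ind, sgn, hiL, hiT]
  rw [Finset.prod_congr rfl h1]
  rw [← Finset.prod_filter_mul_prod_filter_not S (· ∈ L)]
  have h2 : ∀ i ∈ S.filter (· ∈ L), (if i ∈ L then (1:ℝ) else -1) = 1 := by
    intro i hi; rw [if_pos (Finset.mem_filter.1 hi).2]
  have h3 : ∀ i ∈ S.filter (¬ · ∈ L), (if i ∈ L then (1:ℝ) else -1) = -1 := by
    intro i hi; rw [if_neg (Finset.mem_filter.1 hi).2]
  rw [Finset.prod_congr rfl h2, Finset.prod_congr rfl h3, Finset.prod_const_one, one_mul,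
    Finset.prod_const]
  congr 1
  have h4 : S.filter (¬ · ∈ L) = S \ L := by
    ext i; simp [Finset.mem_sdiff]
  rw [h4, Finset.card_sdiff_of_subset hL]

def xset {n : ℕ} (x : Fin n → Bool) : Finset (Fin n) :=
  Finset.univ.filter (fun i => x i = true)

lemma xset_ind {n : ℕ} (A : Finset (Fin n)) : xset (ind A) = A := by
  ext i; simp [xset, ind]

lemma ind_xset {n : ℕ} (x : Fin n → Bool) : ind (xset x) = x := by
  funext i
  by_cases h : x i = true
  · simp [ind, xset, h]
  · simp only [Bool.not_eq_true] at h
    simp [ind, xset, h]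

lemma dcoef_eq {n : ℕ} (f : (Fin n → Bool) → ℝ) (S : Finset (Fin n)) :
    dcoef f S = ∑ T ∈ (Finset.univ \ S).powerset, ∑ L ∈ S.powerset,
      (-1:ℝ)^(S.card - L.card) * f (ind (T ∪ L)) := by
  have hprod := Finset.sum_product' (s := (Finset.univ \ S).powerset) (t := S.powerset)
    (f := fun T L => (-1:ℝ)^(S.card - L.card) * f (ind (T ∪ L)))
  rw [← hprod, dcoef]
  refine Finset.sum_nbij' (fun x => (xset x \ S, xset x ∩ S))
    (fun p => ind (p.1 ∪ p.2)) ?_ ?_ ?_ ?_ ?_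
  · intro x _
    refine Finset.mem_product.2 ⟨?_, ?_⟩
    · exact Finset.mem_powerset.2 (Finset.sdiff_subset_sdiff (Finset.subset_univ _) (le_refl _))
    · exact Finset.mem_powerset.2 Finset.inter_subset_right
  · intro p _; exact Finset.mem_univ _
  · intro x _
    show ind (xset x \ S ∪ xset x ∩ S) = x
    rw [Finset.sdiff_union_inter, ind_xset]
  · intro p hp
    rw [Finset.mem_product, Finset.mem_powerset, Finset.mem_powerset] at hp
    obtain ⟨h1, h2⟩ := hp
    have hdisj : Disjoint p.1 S :=
      Finset.disjoint_of_subset_left h1 Finset.sdiff_disjoint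
    have e1 : xset (ind (p.1 ∪ p.2)) = p.1 ∪ p.2 := xset_ind _
    have e2 : (p.1 ∪ p.2) \ S = p.1 := by
      rw [Finset.union_sdiff_distrib,
        Finset.sdiff_eq_self_iff_disjoint.2 hdisj,
        Finset.sdiff_eq_empty_iff_subset.2 h2, Finset.union_empty]
    have e3 : (p.1 ∪ p.2) ∩ S = p.2 := by
      rw [Finset.union_inter_distrib_right,
        Finset.disjoint_iff_inter_eq_empty.1 hdisj,
        Finset.inter_eq_left.2 h2, Finset.empty_union]
    have : ((fun x => (xset x \ S, xset x ∩ S)) ((fun p => ind (p.1 ∪ p.2)) p)) = p := by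
      simp only [e1, e2, e3]
    exact this
  · intro x _
    simp only
    have hphi : phi S x = (-1:ℝ)^(S.card - (xset x ∩ S).card) := by
      conv_lhs => rw [← ind_xset x, ← Finset.sdiff_union_inter (xset x) S]
      exact phi_ind S _ _ Finset.sdiff_disjoint Finset.inter_subset_right
    show f x * phi S x = (-1:ℝ)^(S.card - (xset x ∩ S).card) * f (ind (xset x \ S ∪ xset x ∩ S))
    rw [Finset.sdiff_union_inter, ind_xset, hphi]
    ring

lemma astar_top {n k : ℕ} (hkn : k ≤ n) (f : (Fin n → Bool) → ℝ) (S : Finset (Fin n))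
    (hS : S.card = k) : astar f k S = BII f S := by
  rw [astar]
  have hfilter : Finset.univ.filter (fun U => S ⊆ U ∧ U.card ≤ k) = {S} := by
    ext U
    simp only [Finset.mem_filter, Finset.mem_univ, true_and, Finset.mem_singleton]
    constructor
    · rintro ⟨h1, h2⟩
      exact (Finset.eq_of_subset_of_card_le h1 (by omega)).symm
    · rintro rfl
      exact ⟨Finset.Subset.refl _, le_of_eq hS⟩
  rw [hfilter, Finset.sum_singleton, Nat.sub_self, pow_zero, one_mul, hatf, dcoef_eq, BII]
  simp only [hS]
  have h2 : (2:ℝ)^(n-k) * 2^k = 2^n := by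
    rw [← pow_add, Nat.sub_add_cancel hkn]
  have h2n : (2:ℝ)^n ≠ 0 := by positivity
  have h2nk : (2:ℝ)^(n-k) ≠ 0 := by positivity
  field_simp
  linear_combination (∑ T ∈ (Finset.univ \ S).powerset, ∑ L ∈ S.powerset,
      (-1:ℝ)^(k - L.card) * f (ind (T ∪ L))) * h2


/-- Among all multilinear polynomials of degree at most `k` there is a unique
minimizer of the squared loss against `f`, and for every `S` with `|S| = k` the
coefficient of `∏_{i∈S} x_i` in the minimizer equals the Banzhaf interaction
index of `S`. -/
theorem banzhaf_interaction_of_least_squares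
    (n k : ℕ) (hn : 1 ≤ n) (hk1 : 1 ≤ k) (hkn : k ≤ n)
    (f : (Fin n → Bool) → ℝ) :
    (∃! a : Finset (Fin n) → ℝ,
        (∀ S : Finset (Fin n), k < S.card → a S = 0) ∧
        ∀ b : Finset (Fin n) → ℝ,
          (∀ S : Finset (Fin n), k < S.card → b S = 0) → loss f a ≤ loss f b) ∧
    ∀ a : Finset (Fin n) → ℝ,
      ((∀ S : Finset (Fin n), k < S.card → a S = 0) ∧
        ∀ b : Finset (Fin n) → ℝ,
          (∀ S : Finset (Fin n), k < S.card → b S = 0) → loss f a ≤ loss f b) →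
      ∀ S : Finset (Fin n), S.card = k → a S = BII f S := by
  constructor
  · refine ⟨astar f k, ⟨fun S hS => astar_adm f k S hS, fun b hb => loss_astar_le f b hb⟩, ?_⟩
    intro b hb
    exact eq_astar f b hb.1 (hb.2 (astar f k) (fun S hS => astar_adm f k S hS))
  · intro a ha S hS
    have hae : a = astar f k :=
      eq_astar f a ha.1 (ha.2 (astar f k) (fun S hS => astar_adm f k S hS))
    rw [hae]
    exact astar_top hkn f S hS
end

section
/- Let n ≥ 1 and f : {0,1}^n → ℝ. Let g(x) = a_∅ + Σ_{i=1}^n a_{{i}} x_i be the unique minimizer of Σ_{x ∈ {0,1}^n} (f(x) − g(x))² over affine-linear functions of x (multilinear polynomials of degree at most 1). Then for every i ∈ {1,…,n}, the coefficient a_{{i}} equals the Banzhaf value of i: a_{{i}} = (1/2^{n−1}) Σ_{T ⊆ {1,…,n}∖{i}} (f(1_{T∪{i}}) − f(1_T)). -/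
open Finset

/-- Flip coordinate `i`, as a permutation of the cube. -/
def flipAt {n : ℕ} (i : Fin n) : Equiv.Perm (Fin n → Bool) :=
  Function.Involutive.toPerm (fun x => Function.update x i (!x i)) (by
    intro x; funext j
    by_cases h : j = i
    · subst h; simp
    · simp [Function.update_of_ne h])

lemma sum_flip_zero {n : ℕ} (i : Fin n) (h : (Fin n → Bool) → ℝ)
    (hh : ∀ x, h (Function.update x i (!x i)) = - h x) :
    ∑ x : Fin n → Bool, h x = 0 := by
  have e := Equiv.sum_comp (flipAt i) h
  have e2 : ∑ x : Fin n → Bool, h (flipAt i x) = ∑ x : Fin n → Bool, - h x :=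
    Finset.sum_congr rfl (fun x _ => hh x)
  rw [e, Finset.sum_neg_distrib] at e2
  linarith

lemma bit_not (b : Bool) : bit (!b) = 1 - bit b := by cases b <;> simp [bit]

lemma sum_monom_chi_zero {n : ℕ} (i : Fin n) (S : Finset (Fin n)) (hi : i ∉ S) :
    ∑ x : Fin n → Bool, monom S x * (2 * bit (x i) - 1) = 0 := by
  apply sum_flip_zero i
  intro x
  have h1 : monom S (Function.update x i (!x i)) = monom S x := by
    apply Finset.prod_congr rfl
    intro j hj
    have : j ≠ i := fun h => hi (h ▸ hj)
    rw [Function.update_of_ne this]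
  rw [h1]
  simp [bit_not]
  ring

lemma sum_bit {n : ℕ} (hn : 1 ≤ n) (i : Fin n) :
    ∑ x : Fin n → Bool, bit (x i) = 2 ^ (n - 1) := by
  have h0 := sum_monom_chi_zero i ∅ (by simp)
  simp only [monom, Finset.prod_empty, one_mul] at h0
  rw [Finset.sum_sub_distrib] at h0
  simp only [Finset.sum_const, Finset.card_univ] at h0
  rw [← Finset.mul_sum] at h0
  have hc : (Fintype.card (Fin n → Bool) : ℝ) = 2 ^ n := by
    simp [Fintype.card_fun]
  have hp : (2:ℝ) ^ n = 2 * 2 ^ (n - 1) := by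
    rw [← pow_succ']
    congr 1
    omega
  rw [nsmul_eq_mul, hc, hp] at h0
  linarith

lemma sum_monom_i_chi {n : ℕ} (hn : 1 ≤ n) (i : Fin n) :
    ∑ x : Fin n → Bool, monom {i} x * (2 * bit (x i) - 1) = 2 ^ (n - 1) := by
  have : ∀ x : Fin n → Bool, monom {i} x * (2 * bit (x i) - 1) = bit (x i) := by
    intro x
    simp only [monom, Finset.prod_singleton]
    cases x i <;> simp [bit] <;> ring
  rw [Finset.sum_congr rfl (fun x _ => this x), sum_bit hn i]

lemma sum_poly_chi {n : ℕ} (hn : 1 ≤ n) (i : Fin n) (a : Finset (Fin n) → ℝ)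
    (hsupp : ∀ S : Finset (Fin n), 1 < S.card → a S = 0) :
    ∑ x : Fin n → Bool, poly a x * (2 * bit (x i) - 1) = 2 ^ (n - 1) * a {i} := by
  simp only [poly, Finset.sum_mul]
  rw [Finset.sum_comm]
  have : ∀ S : Finset (Fin n),
      ∑ x : Fin n → Bool, a S * monom S x * (2 * bit (x i) - 1)
        = a S * ∑ x : Fin n → Bool, monom S x * (2 * bit (x i) - 1) := by
    intro S
    rw [Finset.mul_sum]
    exact Finset.sum_congr rfl (fun x _ => by ring)
  rw [Finset.sum_congr rfl (fun S _ => this S)]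
  rw [Finset.sum_eq_single {i}]
  · rw [sum_monom_i_chi hn i]; ring
  · intro S _ hS
    by_cases hiS : i ∈ S
    · have hsub : ({i} : Finset (Fin n)) ⊂ S :=
        Finset.ssubset_iff_subset_ne.mpr
          ⟨Finset.singleton_subset_iff.mpr hiS, fun h => hS h.symm⟩
      have hcard : 1 < S.card := by
        have := Finset.card_lt_card hsub
        simpa using this
      rw [hsupp S hcard, zero_mul]
    · rw [sum_monom_chi_zero i S hiS, mul_zero]
  · simp

lemma orth {n : ℕ} (f : (Fin n → Bool) → ℝ) (a : Finset (Fin n) → ℝ)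
    (hsupp : ∀ S : Finset (Fin n), 1 < S.card → a S = 0)
    (hmin : ∀ b : Finset (Fin n) → ℝ,
      (∀ S : Finset (Fin n), 1 < S.card → b S = 0) → loss f a ≤ loss f b)
    (S : Finset (Fin n)) (hS : S.card ≤ 1) :
    ∑ x : Fin n → Bool, (f x - poly a x) * monom S x = 0 := by
  set L := ∑ x : Fin n → Bool, (f x - poly a x) * monom S x with hL
  set Q := ∑ x : Fin n → Bool, (monom S x) ^ 2 with hQ
  have hQ0 : 0 ≤ Q := Finset.sum_nonneg (fun x _ => sq_nonneg _)
  have key : ∀ t : ℝ, 0 ≤ t ^ 2 * Q - 2 * t * L := by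
    intro t
    have hb := hmin (fun S' => a S' + t * (if S' = S then 1 else 0)) (by
      intro S' hS'
      have hne : S' ≠ S := by
        intro h; rw [h] at hS'; omega
      simp [hne, hsupp S' hS'])
    have hp : ∀ x, poly (fun S' => a S' + t * (if S' = S then 1 else 0)) x
        = poly a x + t * monom S x := by
      intro x
      simp only [poly, add_mul, Finset.sum_add_distrib]
      congr 1
      rw [Finset.sum_congr rfl (g := fun S' => if S' = S then t * monom S' x else 0)
        (fun S' _ => by by_cases h : S' = S <;> simp [h])]
      simp
    have hexp : loss f (fun S' => a S' + t * (if S' = S then 1 else 0))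
        = loss f a + (t ^ 2 * Q - 2 * t * L) := by
      simp only [loss, hp, hL, hQ]
      rw [Finset.mul_sum, Finset.mul_sum, ← Finset.sum_sub_distrib, ← Finset.sum_add_distrib]
      apply Finset.sum_congr rfl
      intro x _
      ring
    rw [hexp] at hb
    linarith
  have h := key (L / (Q + 1))
  have hpos : (0:ℝ) < Q + 1 := by linarith
  have e : (L / (Q + 1)) ^ 2 * Q - 2 * (L / (Q + 1)) * L
      = (L ^ 2 * Q - 2 * L ^ 2 * (Q + 1)) / (Q + 1) ^ 2 := by
    field_simp
  rw [e, le_div_iff₀ (by positivity)] at h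
  nlinarith [sq_nonneg L]

lemma sum_false_side {n : ℕ} (i : Fin n) (f : (Fin n → Bool) → ℝ) :
    ∑ T ∈ (Finset.univ \ {i}).powerset, f (ind T)
      = ∑ x ∈ Finset.univ.filter (fun x : Fin n → Bool => x i = false), f x := by
  apply Finset.sum_nbij' (i := fun T => ind T)
    (j := fun x => Finset.univ.filter (fun j => x j = true))
  · intro T hT
    simp only [Finset.mem_powerset, Finset.subset_sdiff] at hT
    simp only [Finset.mem_filter, Finset.mem_univ, true_and, ind]
    have : i ∉ T := by
      intro h
      exact (Finset.disjoint_right.mp hT.2 (by simp)) h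
    simp [this]
  · intro x hx
    simp only [Finset.mem_filter, Finset.mem_univ, true_and] at hx
    simp only [Finset.mem_powerset, Finset.subset_sdiff]
    constructor
    · intro j _; exact Finset.mem_univ j
    · rw [Finset.disjoint_right]
      intro j hj
      simp only [Finset.mem_singleton] at hj
      subst hj
      simp [hx]
  · intro T _
    ext j
    simp [ind]
  · intro x _
    funext j
    simp [ind]
  · intro T _; rfl

lemma sum_true_side {n : ℕ} (i : Fin n) (f : (Fin n → Bool) → ℝ) :
    ∑ T ∈ (Finset.univ \ {i}).powerset, f (ind (insert i T))
      = ∑ x ∈ Finset.univ.filter (fun x : Fin n → Bool => x i = true), f x := by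
  apply Finset.sum_nbij' (i := fun T => ind (insert i T))
    (j := fun x => (Finset.univ \ {i}).filter (fun j => x j = true))
  · intro T _
    simp [ind]
  · intro x _
    simp [Finset.filter_subset]
  · intro T hT
    simp only [Finset.mem_powerset, Finset.subset_sdiff] at hT
    ext j
    simp only [Finset.mem_filter, Finset.mem_sdiff, Finset.mem_univ, true_and,
      Finset.mem_singleton, ind, Finset.mem_insert, decide_eq_true_eq]
    constructor
    · rintro ⟨hji, hj | hj⟩
      · exact absurd hj hji
      · exact hj
    · intro hj
      have : j ≠ i := by
        intro h; subst h
        exact (Finset.disjoint_right.mp hT.2 (by simp)) hj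
      exact ⟨this, Or.inr hj⟩
  · intro x hx
    simp only [Finset.mem_filter, Finset.mem_univ, true_and] at hx
    funext j
    by_cases h : j = i
    · subst h
      simp [ind, hx]
    · simp only [ind, Finset.mem_insert, h, false_or, Finset.mem_filter,
        Finset.mem_sdiff, Finset.mem_univ, true_and, Finset.mem_singleton]
      cases hxj : x j <;> simp [h, hxj]
  · intro T _; rfl


/-- In the unique least-squares best affine-linear (degree at most 1) approximation
of `f`, the coefficient of `x_i` equals the Banzhaf value of player `i`:
`(1/2^{n−1}) ∑_{T ⊆ N∖{i}} (f(1_{T∪{i}}) − f(1_T))`. -/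
theorem linear_least_squares_coeff_eq_banzhaf_value
    (n : ℕ) (hn : 1 ≤ n) (f : (Fin n → Bool) → ℝ)
    (a : Finset (Fin n) → ℝ)
    (hsupp : ∀ S : Finset (Fin n), 1 < S.card → a S = 0)
    (hmin : ∀ b : Finset (Fin n) → ℝ,
      (∀ S : Finset (Fin n), 1 < S.card → b S = 0) → loss f a ≤ loss f b) :
    ∀ i : Fin n,
      a {i} = (1 / 2 ^ (n - 1)) *
        ∑ T ∈ (Finset.univ \ {i}).powerset, (f (ind (insert i T)) - f (ind T)) := by
  intro i
  -- orthogonality conditions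
  have h0 := orth f a hsupp hmin ∅ (by simp)
  have h1 := orth f a hsupp hmin {i} (by simp)
  simp only [monom, Finset.prod_empty, mul_one, Finset.prod_singleton] at h0 h1
  -- combined: ∑ (f - poly a) * χ = 0
  have hchi : ∑ x : Fin n → Bool, (f x - poly a x) * (2 * bit (x i) - 1) = 0 := by
    have : ∀ x : Fin n → Bool, (f x - poly a x) * (2 * bit (x i) - 1)
        = 2 * ((f x - poly a x) * bit (x i)) - (f x - poly a x) := by intro x; ring
    rw [Finset.sum_congr rfl (fun x _ => this x), Finset.sum_sub_distrib,
      ← Finset.mul_sum, h1, h0]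
    ring
  -- so ∑ f χ = ∑ poly a χ = 2^{n-1} a{i}
  have hfchi : ∑ x : Fin n → Bool, f x * (2 * bit (x i) - 1) = 2 ^ (n - 1) * a {i} := by
    have hsplit : ∀ x : Fin n → Bool, f x * (2 * bit (x i) - 1)
        = (f x - poly a x) * (2 * bit (x i) - 1) + poly a x * (2 * bit (x i) - 1) := by
      intro x; ring
    rw [Finset.sum_congr rfl (fun x _ => hsplit x), Finset.sum_add_distrib, hchi,
      sum_poly_chi hn i a hsupp]
    ring
  -- Banzhaf sum = ∑ f χ
  have hB : ∑ T ∈ (Finset.univ \ {i}).powerset, (f (ind (insert i T)) - f (ind T))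
      = ∑ x : Fin n → Bool, f x * (2 * bit (x i) - 1) := by
    rw [Finset.sum_sub_distrib, sum_true_side i f, sum_false_side i f]
    rw [← Finset.sum_filter_add_sum_filter_not Finset.univ (fun x : Fin n → Bool => x i = true)
      (fun x => f x * (2 * bit (x i) - 1))]
    have hT : ∀ x ∈ Finset.univ.filter (fun x : Fin n → Bool => x i = true),
        f x * (2 * bit (x i) - 1) = f x := by
      intro x hx
      simp only [Finset.mem_filter] at hx
      rw [hx.2]
      simp [bit]
      ring
    have hF : ∀ x ∈ Finset.univ.filter (fun x : Fin n → Bool => ¬ x i = true),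
        f x * (2 * bit (x i) - 1) = - f x := by
      intro x hx
      simp only [Finset.mem_filter, Bool.not_eq_true] at hx
      rw [hx.2]
      simp [bit]
    rw [Finset.sum_congr rfl hT, Finset.sum_congr rfl hF, Finset.sum_neg_distrib]
    have : Finset.univ.filter (fun x : Fin n → Bool => ¬ x i = true)
        = Finset.univ.filter (fun x : Fin n → Bool => x i = false) := by
      apply Finset.filter_congr
      intro x _
      simp
    rw [this]
    ring
  rw [hB, hfchi]
  have h2 : (2:ℝ) ^ (n - 1) ≠ 0 := by positivity
  field_simp
end
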